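/- For every integer n ≥ 5, the commutator subgroup SG_n' = [SG_n, SG_n] of the singular braid group SG_n equals the subgroup of SG_n generated by the 2n − 4 elements: α_{0,0,2} = σ_2 σ_1^{−1}, α_{1,0,2} = σ_1 σ_2 σ_1^{−2}, together with, for each j with 3 ≤ j ≤ n−1, the elements α_j = σ_j σ_1^{−1} and β_{0,j} = ρ_j ρ_1^{−1}. -/

import Mathlib

/-!
Let `H` be the subgroup generated by the given elements (indices here are the paper's, 1-based).
Every `σᵢ` is conjugate to `σ₁` (braid relation) and every `ρᵢ` to `ρ₁` (mixed relation
`ρᵢσᵢ₊₁σᵢ = σᵢ₊₁σᵢρᵢ₊₁`), so the generators of `H` vanish in the abelianization: `H ≤ SG_n'`.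

Conversely, `σ₁` normalizes `H` by the braid relation, and so does `ρ₁`: it commutes with the
`α_j, β_{0,j}`, and on `α_{0,0,2}, α_{1,0,2}`, which commute with `ρ₄`, it acts as conjugation
by `ρ₁ρ₄⁻¹ = β_{0,4}⁻¹ ∈ H`. The mixed relation then gives
`ρ₂ρ₁⁻¹ = σ₁⁻² (α_{0,0,2}⁻¹ · ρ₁α_{0,0,2}ρ₁⁻¹) σ₁² ∈ H`. Hence every `σᵢ` is `σ₁` and every `ρᵢ`
is `ρ₁` modulo `H`, so `H` is normal and `SG_n / H` is generated by the commuting images of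
`σ₁` and `ρ₁`.
-/

namespace SingBraid

/-- The free-group generator word for `σ_{i+1}` (0-indexed `i`). -/
def σw (n : ℕ) (i : Fin (n-1)) : FreeGroup (Fin (n-1) ⊕ Fin (n-1)) := FreeGroup.of (Sum.inl i)

/-- The free-group generator word for `ρ_{i+1}` (0-indexed `i`). -/
def ρw (n : ℕ) (i : Fin (n-1)) : FreeGroup (Fin (n-1) ⊕ Fin (n-1)) := FreeGroup.of (Sum.inr i)

/-- Defining relators of the singular braid group `SG_n`. -/
def sgRels (n : ℕ) : Set (FreeGroup (Fin (n-1) ⊕ Fin (n-1))) :=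
  {r | ∃ i j : Fin (n-1), ((i:ℕ)+1 < (j:ℕ) ∨ (j:ℕ)+1 < (i:ℕ)) ∧
      r = σw n i * σw n j * (σw n i)⁻¹ * (σw n j)⁻¹} ∪
  {r | ∃ i j : Fin (n-1), (j:ℕ) = (i:ℕ)+1 ∧
      r = σw n i * σw n j * σw n i * (σw n j * σw n i * σw n j)⁻¹} ∪
  {r | ∃ i j : Fin (n-1), ((i:ℕ)+1 < (j:ℕ) ∨ (j:ℕ)+1 < (i:ℕ)) ∧
      r = ρw n i * ρw n j * (ρw n i)⁻¹ * (ρw n j)⁻¹} ∪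
  {r | ∃ i j : Fin (n-1), (j:ℕ) = (i:ℕ)+1 ∧
      r = ρw n i * σw n j * σw n i * (σw n j * σw n i * ρw n j)⁻¹} ∪
  {r | ∃ i j : Fin (n-1), (j:ℕ) = (i:ℕ)+1 ∧
      r = ρw n j * σw n i * σw n j * (σw n i * σw n j * ρw n i)⁻¹} ∪
  {r | ∃ i j : Fin (n-1), (i = j ∨ (i:ℕ)+1 < (j:ℕ) ∨ (j:ℕ)+1 < (i:ℕ)) ∧
      r = σw n i * ρw n j * (σw n i)⁻¹ * (ρw n j)⁻¹}

/-- The singular braid group `SG_n`, given by the Baez–Birman presentation. -/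
abbrev SG (n : ℕ) := PresentedGroup (sgRels n)

/-- The generator `σ_{i+1}` of `SG_n` (0-indexed `i`). -/
def σ (n : ℕ) (i : Fin (n-1)) : SG n := PresentedGroup.of (Sum.inl i)

/-- The generator `ρ_{i+1}` of `SG_n` (0-indexed `i`). -/
def ρ (n : ℕ) (i : Fin (n-1)) : SG n := PresentedGroup.of (Sum.inr i)

end SingBraid


open Subgroup
open scoped commutatorElement

section GroupTheory

variable {G : Type*} [Group G]

theorem mul_inv_mem_commutator_of_isConj {x y : G} (h : IsConj x y) :
    x * y⁻¹ ∈ commutator G := by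
  obtain ⟨c, rfl⟩ := isConj_iff.1 h
  have hxc : x * (c * x * c⁻¹)⁻¹ = ⁅x, c⁆ := by rw [commutatorElement_def]; group
  rw [hxc, _root_.commutator_def]
  exact commutator_mem_commutator (mem_top x) (mem_top c)

theorem isConj_of_forall_isConj_succ {m : ℕ} {f : Fin m → G}
    (h : ∀ (i : ℕ) (hi : i + 1 < m), IsConj (f ⟨i, by omega⟩) (f ⟨i + 1, hi⟩)) (i j : Fin m) :
    IsConj (f i) (f j) := by
  have from_zero : ∀ (k : ℕ) (hk : k < m), IsConj (f ⟨0, by omega⟩) (f ⟨k, hk⟩) := by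
    intro k hk
    induction k with
    | zero => exact IsConj.refl _
    | succ k ih => exact (ih (by omega)).trans (h k hk)
  exact (from_zero i i.2).symm.trans (from_zero j j.2)

theorem mem_normalizer_closure_of_conj_mem {X : Set G} {g : G}
    (h : ∀ x ∈ X, g * x * g⁻¹ ∈ closure X) (h' : ∀ x ∈ X, g⁻¹ * x * g⁻¹⁻¹ ∈ closure X) :
    g ∈ normalizer (closure X : Set G) := by
  have conj_mem : ∀ u : G, (∀ x ∈ X, u * x * u⁻¹ ∈ closure X) →
      ∀ y ∈ closure X, u * y * u⁻¹ ∈ closure X :=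
    fun u hu y hy => (closure_le ((closure X).comap (MulAut.conj u).toMonoidHom)).2 hu hy
  refine mem_normalizer_iff.2 fun y => ⟨conj_mem g h y, fun hy => ?_⟩
  simpa [mul_assoc] using conj_mem g⁻¹ h' _ hy

theorem conj_mem_of_eq_mul_of_commute {H : Subgroup G} {g k u x : G} (hg : g = k * u)
    (hk : k ∈ H) (hx : x ∈ H) (hux : Commute u x) : g * x * g⁻¹ ∈ H := by
  have hconj : g * x * g⁻¹ = k * x * k⁻¹ := by
    rw [hg, mul_assoc k u x, hux.eq]; group
  rw [hconj]
  exact mul_mem (mul_mem hk hx) (inv_mem hk)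

theorem commutator_le_of_commute_mk {N : Subgroup G} [N.Normal] {S : Set G}
    (hS : closure S = ⊤) (hcomm : ∀ x ∈ S, ∀ y ∈ S, Commute (x : G ⧸ N) (y : G ⧸ N)) :
    commutator G ≤ N := by
  have hgen : closure (QuotientGroup.mk' N '' S) = ⊤ := by
    rw [← MonoidHom.map_closure, hS, ← MonoidHom.range_eq_map, QuotientGroup.range_mk']
  have hcent := closure_le_centralizer_centralizer (QuotientGroup.mk' N '' S)
  rw [hgen] at hcent
  have hcomm' : ∀ a b : G ⧸ N, a * b = b * a := fun a b =>
    Set.centralizer_centralizer_comm_of_comm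
      (by rintro _ ⟨x, hx, rfl⟩ _ ⟨y, hy, rfl⟩; exact hcomm x hx y hy)
      a (hcent (mem_top a)) b (hcent (mem_top b))
  rw [_root_.commutator_def, commutator_le]
  rintro g₁ - g₂ -
  rw [← QuotientGroup.eq_one_iff, ← QuotientGroup.mk'_apply, map_commutatorElement]
  exact commutatorElement_eq_one_iff_mul_comm.2 (hcomm' _ _)

end GroupTheory

namespace SingBraid

variable {n : ℕ}

theorem mk_eq_one_of_mem_sgRels {r : FreeGroup (Fin (n-1) ⊕ Fin (n-1))} (h : r ∈ sgRels n) :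
    PresentedGroup.mk (sgRels n) r = 1 :=
  (QuotientGroup.eq_one_iff r).2 (subset_normalClosure h)

theorem σ_commute_σ {i j : Fin (n-1)} (h : (i:ℕ) + 1 < j ∨ (j:ℕ) + 1 < i) :
    Commute (σ n i) (σ n j) :=
  commutatorElement_eq_one_iff_mul_comm.1
    (mk_eq_one_of_mem_sgRels (.inl (.inl (.inl (.inl (.inl ⟨i, j, h, rfl⟩))))))

theorem σ_braid {i j : Fin (n-1)} (h : (j:ℕ) = i + 1) :
    σ n i * σ n j * σ n i = σ n j * σ n i * σ n j :=
  mul_inv_eq_one.1 (mk_eq_one_of_mem_sgRels (.inl (.inl (.inl (.inl (.inr ⟨i, j, h, rfl⟩))))))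

theorem ρ_commute_ρ {i j : Fin (n-1)} (h : (i:ℕ) + 1 < j ∨ (j:ℕ) + 1 < i) :
    Commute (ρ n i) (ρ n j) :=
  commutatorElement_eq_one_iff_mul_comm.1
    (mk_eq_one_of_mem_sgRels (.inl (.inl (.inl (.inr ⟨i, j, h, rfl⟩)))))

theorem ρ_mul_σ_mul_σ {i j : Fin (n-1)} (h : (j:ℕ) = i + 1) :
    ρ n i * σ n j * σ n i = σ n j * σ n i * ρ n j :=
  mul_inv_eq_one.1 (mk_eq_one_of_mem_sgRels (.inl (.inl (.inr ⟨i, j, h, rfl⟩))))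

theorem σ_commute_ρ {i j : Fin (n-1)} (h : i = j ∨ (i:ℕ) + 1 < j ∨ (j:ℕ) + 1 < i) :
    Commute (σ n i) (ρ n j) :=
  commutatorElement_eq_one_iff_mul_comm.1 (mk_eq_one_of_mem_sgRels (.inr ⟨i, j, h, rfl⟩))

theorem isConj_σ (i j : Fin (n-1)) : IsConj (σ n i) (σ n j) :=
  isConj_of_forall_isConj_succ (fun i hi => isConj_iff.2
    ⟨σ n ⟨i, by omega⟩ * σ n ⟨i + 1, hi⟩, by rw [σ_braid rfl]; group⟩) i j

theorem isConj_ρ (i j : Fin (n-1)) : IsConj (ρ n i) (ρ n j) := by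
  refine isConj_of_forall_isConj_succ (fun i hi => ?_) i j
  set a : Fin (n-1) := ⟨i, by omega⟩
  set b : Fin (n-1) := ⟨i + 1, hi⟩
  refine isConj_iff.2 ⟨(σ n b * σ n a)⁻¹, ?_⟩
  calc (σ n b * σ n a)⁻¹ * ρ n a * (σ n b * σ n a)⁻¹⁻¹
      = (σ n b * σ n a)⁻¹ * (ρ n a * σ n b * σ n a) := by group
    _ = ρ n b := by rw [ρ_mul_σ_mul_σ rfl]; group

section CommutatorGens

variable (hn : 5 ≤ n)

local notation "s" => σ n (Fin.mk 0 (Nat.lt_sub_of_add_lt (by omega)))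
local notation "t" => σ n (Fin.mk 1 (Nat.lt_sub_of_add_lt (by omega)))
local notation "p" => ρ n (Fin.mk 0 (Nat.lt_sub_of_add_lt (by omega)))
local notation "q" => ρ n (Fin.mk 1 (Nat.lt_sub_of_add_lt (by omega)))
local notation "m" => ρ n (Fin.mk 3 (Nat.lt_sub_of_add_lt (by omega)))

def commutatorGens : Set (SG n) :=
  {t * s⁻¹, s * t * s⁻¹ * s⁻¹} ∪
    {x | ∃ j : Fin (n-1), 2 ≤ (j : ℕ) ∧ (x = σ n j * s⁻¹ ∨ x = ρ n j * p⁻¹)}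

local notation "H" => closure (commutatorGens hn)

theorem forall_mem_commutatorGens {P : SG n → Prop} (ha : P (t * s⁻¹))
    (hb : P (s * t * s⁻¹ * s⁻¹)) (hα : ∀ j : Fin (n-1), 2 ≤ (j:ℕ) → P (σ n j * s⁻¹))
    (hβ : ∀ j : Fin (n-1), 2 ≤ (j:ℕ) → P (ρ n j * p⁻¹)) :
    ∀ x ∈ commutatorGens hn, P x := by
  rintro x ((rfl | rfl) | ⟨j, hj, rfl | rfl⟩)
  exacts [ha, hb, hα j hj, hβ j hj]

theorem closure_commutatorGens_le_commutator : H ≤ commutator (SG n) := by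
  rw [closure_le]
  refine forall_mem_commutatorGens hn ?_ ?_ (fun j _ => ?_) (fun j _ => ?_)
  · exact mul_inv_mem_commutator_of_isConj (isConj_σ _ _)
  · exact mul_inv_mem_commutator_of_isConj
      ((isConj_iff.2 ⟨s⁻¹, by group⟩ : IsConj (s * t * s⁻¹) t).trans (isConj_σ _ _))
  · exact mul_inv_mem_commutator_of_isConj (isConj_σ _ _)
  · exact mul_inv_mem_commutator_of_isConj (isConj_ρ _ _)

theorem σ_one_mul_inv_mem : t * s⁻¹ ∈ H :=
  subset_closure (.inl (.inl rfl))

theorem σ_zero_conj_σ_one_mul_inv_mem : s * t * s⁻¹ * s⁻¹ ∈ H :=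
  subset_closure (.inl (.inr rfl))

theorem ρ_mul_inv_mem_of_two_le {j : Fin (n-1)} (hj : 2 ≤ (j:ℕ)) : ρ n j * p⁻¹ ∈ H :=
  subset_closure (.inr ⟨j, hj, .inr rfl⟩)

theorem σ_mul_inv_mem (j : Fin (n-1)) : σ n j * s⁻¹ ∈ H := by
  obtain ⟨_ | _ | k, hk⟩ := j
  · simp
  · exact σ_one_mul_inv_mem hn
  · exact subset_closure (.inr ⟨⟨k + 2, hk⟩, by simp, .inl rfl⟩)

theorem commute_σ_zero_of_two_le {j : Fin (n-1)} (hj : 2 ≤ (j:ℕ)) :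
    Commute s (σ n j * s⁻¹) ∧ Commute s (ρ n j * p⁻¹) :=
  ⟨(σ_commute_σ (.inl (by simp; omega))).mul_right (Commute.refl _).inv_right,
    (σ_commute_ρ (.inr (.inl (by simp; omega)))).mul_right (σ_commute_ρ (.inl rfl)).inv_right⟩

theorem commute_ρ_zero_of_two_le {j : Fin (n-1)} (hj : 2 ≤ (j:ℕ)) :
    Commute p (σ n j * s⁻¹) ∧ Commute p (ρ n j * p⁻¹) :=
  ⟨(σ_commute_ρ (.inr (.inr (by simp; omega)))).symm.mul_right
      (σ_commute_ρ (.inl rfl)).symm.inv_right,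
    (ρ_commute_ρ (.inl (by simp; omega))).mul_right (Commute.refl _).inv_right⟩

theorem σ_zero_mem_normalizer : s ∈ normalizer (H : Set (SG n)) := by
  have hbraid : s * t * s = t * s * t := σ_braid rfl
  apply mem_normalizer_closure_of_conj_mem
  · refine forall_mem_commutatorGens hn ?_ ?_ (fun j hj => ?_) (fun j hj => ?_)
    · have : s * (t * s⁻¹) * s⁻¹ = s * t * s⁻¹ * s⁻¹ := by group
      exact this ▸ σ_zero_conj_σ_one_mul_inv_mem hn
    · have : s * (s * t * s⁻¹ * s⁻¹) * s⁻¹ = (t * s⁻¹)⁻¹ * (s * t * s⁻¹ * s⁻¹) := by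
        calc _ = s * t⁻¹ * (t * s * t) * s⁻¹ ^ 3 := by group
          _ = _ := by rw [← hbraid]; group
      exact this ▸ mul_mem (inv_mem (σ_one_mul_inv_mem hn)) (σ_zero_conj_σ_one_mul_inv_mem hn)
    · rw [(commute_σ_zero_of_two_le hn hj).1.mul_inv_cancel]; exact σ_mul_inv_mem hn j
    · rw [(commute_σ_zero_of_two_le hn hj).2.mul_inv_cancel]; exact ρ_mul_inv_mem_of_two_le hn hj
  · refine forall_mem_commutatorGens hn ?_ ?_ (fun j hj => ?_) (fun j hj => ?_)
    · have : s⁻¹ * (t * s⁻¹) * s⁻¹⁻¹ = (t * s⁻¹) * (s * t * s⁻¹ * s⁻¹)⁻¹ := by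
        calc _ = s⁻¹ * (t * s * t) * (t⁻¹ * s⁻¹) := by group
          _ = _ := by rw [← hbraid]; group
      exact this ▸ mul_mem (σ_one_mul_inv_mem hn) (inv_mem (σ_zero_conj_σ_one_mul_inv_mem hn))
    · have : s⁻¹ * (s * t * s⁻¹ * s⁻¹) * s⁻¹⁻¹ = t * s⁻¹ := by group
      exact this ▸ σ_one_mul_inv_mem hn
    · rw [(commute_σ_zero_of_two_le hn hj).1.inv_left.mul_inv_cancel]; exact σ_mul_inv_mem hn j
    · rw [(commute_σ_zero_of_two_le hn hj).2.inv_left.mul_inv_cancel]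
      exact ρ_mul_inv_mem_of_two_le hn hj

theorem ρ_zero_mem_normalizer : p ∈ normalizer (H : Set (SG n)) := by
  have hms : Commute m s := (σ_commute_ρ (.inr (.inl (by simp)))).symm
  have hmt : Commute m t := (σ_commute_ρ (.inr (.inl (by simp)))).symm
  have hmp : Commute m p := ρ_commute_ρ (.inr (by simp))
  have hma : Commute m (t * s⁻¹) := hmt.mul_right hms.inv_right
  have hmb : Commute m (s * t * s⁻¹ * s⁻¹) :=
    ((hms.mul_right hmt).mul_right hms.inv_right).mul_right hms.inv_right
  have hβ : m * p⁻¹ ∈ H := ρ_mul_inv_mem_of_two_le hn (j := ⟨3, by omega⟩) (by simp)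
  have hp : p = (m * p⁻¹)⁻¹ * m := by group
  have hp' : p⁻¹ = (m * p⁻¹) * m⁻¹ := by rw [hmp.inv_right.eq, mul_inv_cancel_right]
  apply mem_normalizer_closure_of_conj_mem
  · refine forall_mem_commutatorGens hn ?_ ?_ (fun j hj => ?_) (fun j hj => ?_)
    · exact conj_mem_of_eq_mul_of_commute hp (inv_mem hβ) (σ_one_mul_inv_mem hn) hma
    · exact conj_mem_of_eq_mul_of_commute hp (inv_mem hβ) (σ_zero_conj_σ_one_mul_inv_mem hn) hmb
    · rw [(commute_ρ_zero_of_two_le hn hj).1.mul_inv_cancel]; exact σ_mul_inv_mem hn j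
    · rw [(commute_ρ_zero_of_two_le hn hj).2.mul_inv_cancel]; exact ρ_mul_inv_mem_of_two_le hn hj
  · refine forall_mem_commutatorGens hn ?_ ?_ (fun j hj => ?_) (fun j hj => ?_)
    · exact conj_mem_of_eq_mul_of_commute hp' hβ (σ_one_mul_inv_mem hn) hma.inv_left
    · exact conj_mem_of_eq_mul_of_commute hp' hβ (σ_zero_conj_σ_one_mul_inv_mem hn) hmb.inv_left
    · rw [(commute_ρ_zero_of_two_le hn hj).1.inv_left.mul_inv_cancel]; exact σ_mul_inv_mem hn j
    · rw [(commute_ρ_zero_of_two_le hn hj).2.inv_left.mul_inv_cancel]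
      exact ρ_mul_inv_mem_of_two_le hn hj

theorem ρ_one_mul_inv_eq_conj :
    q * p⁻¹ = (s * s)⁻¹ * ((t * s⁻¹)⁻¹ * (p * (t * s⁻¹) * p⁻¹)) * (s * s)⁻¹⁻¹ := by
  have hmix : p * t * s = t * s * q := ρ_mul_σ_mul_σ rfl
  have hsp : Commute (s * s) p⁻¹ :=
    ((σ_commute_ρ (.inl rfl)).mul_left (σ_commute_ρ (.inl rfl))).inv_right
  calc q * p⁻¹ = (t * s)⁻¹ * (p * t * s) * p⁻¹ := by rw [hmix]; group
    _ = s⁻¹ * t⁻¹ * p * t * s⁻¹ * ((s * s) * p⁻¹) := by group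
    _ = s⁻¹ * t⁻¹ * p * t * s⁻¹ * (p⁻¹ * (s * s)) := by rw [hsp.eq]
    _ = _ := by simp only [mul_inv_rev, inv_inv, mul_assoc, inv_mul_cancel_left]

theorem ρ_mul_inv_mem (j : Fin (n-1)) : ρ n j * p⁻¹ ∈ H := by
  obtain ⟨_ | _ | k, hk⟩ := j
  · simp
  · have hs := σ_zero_mem_normalizer hn
    rw [ρ_one_mul_inv_eq_conj hn]
    have hconj : p * (t * s⁻¹) * p⁻¹ ∈ H :=
      (mem_normalizer_iff.1 (ρ_zero_mem_normalizer hn) _).1 (σ_one_mul_inv_mem hn)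
    exact (mem_normalizer_iff.1 (inv_mem (mul_mem hs hs)) _).1
      (mul_mem (inv_mem (σ_one_mul_inv_mem hn)) hconj)
  · exact ρ_mul_inv_mem_of_two_le hn (j := ⟨k + 2, hk⟩) (by simp)

theorem closure_commutatorGens_normal : (closure (commutatorGens hn)).Normal := by
  rw [← normalizer_eq_top_iff, eq_top_iff, ← PresentedGroup.closure_range_of, closure_le]
  rintro _ ⟨j | j, rfl⟩
  · have h := mul_mem (le_normalizer (σ_mul_inv_mem hn j)) (σ_zero_mem_normalizer hn)
    rwa [inv_mul_cancel_right] at h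
  · have h := mul_mem (le_normalizer (ρ_mul_inv_mem hn j)) (ρ_zero_mem_normalizer hn)
    rwa [inv_mul_cancel_right] at h

theorem commutator_le_closure_commutatorGens : commutator (SG n) ≤ H := by
  have := closure_commutatorGens_normal hn
  have hmk : ∀ x, ((PresentedGroup.of x : SG n) : SG n ⧸ H) = s ∨
      ((PresentedGroup.of x : SG n) : SG n ⧸ H) = p := by
    rintro (j | j)
    · exact .inl <| QuotientGroup.eq_iff_div_mem.2 <| div_eq_mul_inv (σ n j) s ▸ σ_mul_inv_mem hn j
    · exact .inr <| QuotientGroup.eq_iff_div_mem.2 <| div_eq_mul_inv (ρ n j) p ▸ ρ_mul_inv_mem hn j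
  have hsp : Commute (s : SG n ⧸ H) p := (σ_commute_ρ (.inl rfl)).map (QuotientGroup.mk' H)
  refine commutator_le_of_commute_mk (PresentedGroup.closure_range_of _) ?_
  rintro _ ⟨x, rfl⟩ _ ⟨y, rfl⟩
  rcases hmk x with hx | hx <;> rcases hmk y with hy | hy <;> rw [hx, hy]
  exacts [hsp, hsp.symm]

end CommutatorGens

end SingBraid

open SingBraid in
/-- For `n ≥ 5`, the commutator subgroup of `SG_n` is generated by the `2n - 4` elements
`α_{0,0,2} = σ₂σ₁⁻¹`, `α_{1,0,2} = σ₁σ₂σ₁⁻²`, and, for `3 ≤ j ≤ n-1` (so `2 ≤ (j:ℕ)` in the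
0-indexed convention), `α_j = σ_jσ₁⁻¹` and `β_{0,j} = ρ_jρ₁⁻¹`. -/
theorem sg_commutator_eq_closure_explicit (n : ℕ) (hn : 5 ≤ n) :
    Subgroup.closure
      (({ σ n ⟨1, by omega⟩ * (σ n ⟨0, by omega⟩)⁻¹,
          σ n ⟨0, by omega⟩ * σ n ⟨1, by omega⟩ * (σ n ⟨0, by omega⟩)⁻¹ *
            (σ n ⟨0, by omega⟩)⁻¹ } : Set (SG n)) ∪
        {x : SG n | ∃ j : Fin (n-1), 2 ≤ (j : ℕ) ∧
          (x = σ n j * (σ n ⟨0, by omega⟩)⁻¹ ∨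
           x = ρ n j * (ρ n ⟨0, by omega⟩)⁻¹)})
      = commutator (SG n) :=
  le_antisymm (closure_commutatorGens_le_commutator hn) (commutator_le_closure_commutatorGens hn)
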